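/- Let ℓ : ℝ × ℝ → [0, M] be a bounded loss function, and let F be a hypothesis class of functions f : X → {0,1}. For two probability distributions S and T on X × Y, the difference of expected losses satisfies |E_{(x,y)∼T} ℓ(f(x), y) − E_{(x,y)∼S} ℓ(f(x), y)| ≤ (M/2) · d_{FΔF}(S, T), where d_{FΔF}(S, T) = 2 · sup_{A ∈ A_{FΔF}} |P_S(A) − P_T(A)| and the supremum over the symmetric-difference hypothesis class dominates the discrepancy of all superlevel sets {(x,y) : ℓ(f(x),y) > t}. -/

import Mathlib

open MeasureTheory

/-!
By the layer-cake formula, the expected loss under either distribution is `∫₀ᴹ P(ℓ > t) dt`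
(the superlevel sets are empty for `t ≥ M`). Every superlevel set lies in `𝒜`, so the two
integrands differ by at most `sup_{A ∈ 𝒜} |S A - T A|` on an interval of length `M`.
-/

namespace MeasureTheory

variable {α : Type*} [MeasurableSpace α]

lemma antitone_measureReal_lt (μ : Measure α) [IsFiniteMeasure μ] (f : α → ℝ) :
    Antitone fun t : ℝ => μ.real {x | t < f x} :=
  fun _ _ hst => measureReal_mono fun _ hx => hst.trans_lt hx

lemma integrableOn_Ioc_measureReal_lt (μ : Measure α) [IsFiniteMeasure μ] (f : α → ℝ) (a b : ℝ) :
    IntegrableOn (fun t : ℝ => μ.real {x | t < f x}) (Set.Ioc a b) :=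
  ((antitone_measureReal_lt μ f).locallyIntegrable.integrableOn_isCompact isCompact_Icc).mono_set
    Set.Ioc_subset_Icc_self

lemma Integrable.integral_eq_integral_Ioc_meas_lt {μ : Measure α} {f : α → ℝ} {M : ℝ}
    (hf : Integrable f μ) (hf_nonneg : ∀ x, 0 ≤ f x) (hf_le : ∀ x, f x ≤ M) :
    ∫ x, f x ∂μ = ∫ t in Set.Ioc 0 M, μ.real {x | t < f x} := by
  rw [hf.integral_eq_integral_meas_lt (.of_forall hf_nonneg)]
  refine setIntegral_eq_of_subset_of_forall_sdiff_eq_zero measurableSet_Ioi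
    Set.Ioc_subset_Ioi_self fun t ht => ?_
  have hMt : M < t := lt_of_not_ge fun htM => ht.2 ⟨ht.1, htM⟩
  have hempty : {x | t < f x} = ∅ :=
    Set.eq_empty_of_forall_notMem fun x hx => lt_asymm hx ((hf_le x).trans_lt hMt)
  simp [hempty]

lemma abs_integral_sub_integral_le_of_abs_measureReal_sub_le {μ ν : Measure α}
    [IsFiniteMeasure μ] [IsFiniteMeasure ν] {f : α → ℝ} {M D : ℝ} (hM : 0 ≤ M)
    (hfμ : Integrable f μ) (hfν : Integrable f ν) (hf_nonneg : ∀ x, 0 ≤ f x)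
    (hf_le : ∀ x, f x ≤ M)
    (hD : ∀ t ∈ Set.Ioc 0 M, |μ.real {x | t < f x} - ν.real {x | t < f x}| ≤ D) :
    |∫ x, f x ∂μ - ∫ x, f x ∂ν| ≤ D * M := by
  rw [hfμ.integral_eq_integral_Ioc_meas_lt hf_nonneg hf_le,
    hfν.integral_eq_integral_Ioc_meas_lt hf_nonneg hf_le,
    ← integral_sub (integrableOn_Ioc_measureReal_lt μ f 0 M)
      (integrableOn_Ioc_measureReal_lt ν f 0 M)]
  simpa [Real.volume_real_Ioc_of_le hM] using
    norm_setIntegral_le_of_norm_le_const (μ := volume) measure_Ioc_lt_top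
      fun t ht => (Real.norm_eq_abs _).trans_le (hD t ht)

lemma bddAbove_abs_measureReal_sub (μ ν : Measure α) [IsProbabilityMeasure μ]
    [IsProbabilityMeasure ν] (𝒜 : Set (Set α)) :
    BddAbove {r : ℝ | ∃ A ∈ 𝒜, r = |μ.real A - ν.real A|} := by
  refine ⟨1, ?_⟩
  rintro _ ⟨A, -, rfl⟩
  simpa using abs_sub_le_of_le_of_le measureReal_nonneg (measureReal_le_one (μ := μ) (s := A))
    measureReal_nonneg (measureReal_le_one (μ := ν) (s := A))

end MeasureTheory

theorem loss_diff_le_dFF_general {X Y : Type*} [MeasurableSpace X] [MeasurableSpace Y]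
    (S T : Measure (X × Y)) [IsProbabilityMeasure S] [IsProbabilityMeasure T]
    (M : ℝ) (hM : 0 ≤ M) (ℓ : ℝ → Y → ℝ)
    (hℓ : ∀ a y, ℓ a y ∈ Set.Icc 0 M)
    (F : Set (X → ℝ)) (𝒜 : Set (Set (X × Y)))
    (hsup : ∀ t ∈ Set.Icc (0:ℝ) M, ∀ g ∈ F, {p : X × Y | ℓ (g p.1) p.2 > t} ∈ 𝒜)
    (f : X → ℝ) (hf : f ∈ F)
    (hint1 : Integrable (fun p => ℓ (f p.1) p.2) S)
    (hint2 : Integrable (fun p => ℓ (f p.1) p.2) T) :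
    |(∫ p, ℓ (f p.1) p.2 ∂T) - ∫ p, ℓ (f p.1) p.2 ∂S| ≤
      (M / 2) * (2 * sSup {r : ℝ | ∃ A ∈ 𝒜, r = |(S A).toReal - (T A).toReal|}) := by
  set D := sSup {r : ℝ | ∃ A ∈ 𝒜, r = |(S A).toReal - (T A).toReal|}
  have hsuperlevel : ∀ t ∈ Set.Ioc 0 M,
      |T.real {p | t < ℓ (f p.1) p.2} - S.real {p | t < ℓ (f p.1) p.2}| ≤ D := fun t ht =>
    (abs_sub_comm _ _).trans_le <| le_csSup (bddAbove_abs_measureReal_sub S T 𝒜)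
      ⟨_, hsup t (Set.Ioc_subset_Icc_self ht) f hf, rfl⟩
  calc _ ≤ D * M := abs_integral_sub_integral_le_of_abs_measureReal_sub_le hM hint2 hint1
          (fun _ => (hℓ _ _).1) (fun _ => (hℓ _ _).2) hsuperlevel
    _ = _ := by ring

/-- bound on the difference of expected losses by the FΔF distance. -/
theorem loss_diff_le_dFF {X Y : Type*} [MeasurableSpace X] [MeasurableSpace Y]
    (S T : Measure (X × Y)) [IsProbabilityMeasure S] [IsProbabilityMeasure T]
    (M : ℝ) (hM : 0 ≤ M) (ℓ : ℝ → Y → ℝ)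
    (hℓ : ∀ a y, ℓ a y ∈ Set.Icc 0 M)
    (F : Set (X → ℝ)) (𝒜 : Set (Set (X × Y)))
    (hmeas : ∀ A ∈ 𝒜, MeasurableSet A)
    (hsup : ∀ t ∈ Set.Icc (0:ℝ) M, ∀ g ∈ F, {p : X × Y | ℓ (g p.1) p.2 > t} ∈ 𝒜)
    (f : X → ℝ) (hf : f ∈ F)
    (hint1 : Integrable (fun p => ℓ (f p.1) p.2) S)
    (hint2 : Integrable (fun p => ℓ (f p.1) p.2) T) :
    |(∫ p, ℓ (f p.1) p.2 ∂T) - ∫ p, ℓ (f p.1) p.2 ∂S| ≤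
      (M / 2) * (2 * sSup {r : ℝ | ∃ A ∈ 𝒜, r = |(S A).toReal - (T A).toReal|}) :=
  loss_diff_le_dFF_general S T M hM ℓ hℓ F 𝒜 hsup f hf hint1 hint2
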